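/- Let d, f, b, c : ℕ → ℤ be defined by d₀ = 1, f₀ = b₀ = c₀ = 0 and dₙ = 3d_{n−1} − 4f_{n−1}, fₙ = c_{n−1}, bₙ = 2d_{n−1} − 3f_{n−1}, cₙ = b_{n−1} for n ≥ 1. Then for every natural number n, as real numbers, dₙ = (8/5)(φ^{2n} + φ^{−2n}) − (1/5)(−1)ⁿ − 2, where φ = (1 + √5)/2 is the golden ratio. In particular dₙ grows like φ^{2n}, so the maps Φ = g∘crem₃ with g of type (C) have positive algebraic entropy S = 2·log φ and are non-integrable. -/

import Mathlib

/-!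
Eliminating `f`, `b`, `c` gives `dₙ₊₄ = dₙ - 3 dₙ₊₁ + 3 dₙ₊₃`, whose characteristic polynomial
`(X² - 1)(X² - 3X + 1)` has the roots `1`, `-1`, `φ²` and `ψ² = φ⁻²`. So `d` is a linear combination
of the four geometric sequences, with coefficients fixed by `d₀, …, d₃ = 1, 3, 9, 27`.
As `2 < φ²` and `ψ² < 1`, this gives `φ²ⁿ / 2 ≤ dₙ ≤ (8/5) φ²ⁿ` for `n ≥ 1`, hence
`log dₙ / n → log φ²`.
-/

noncomputable section

open Filter

/-- The golden ratio `φ = (1 + √5)/2`. -/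
def phi : ℝ := (1 + Real.sqrt 5) / 2

section

open Real goldenRatio Topology

theorem tendsto_log_div_of_le_of_le {u : ℕ → ℝ} {a c₁ c₂ : ℝ} (ha : 0 < a) (hc₁ : 0 < c₁)
    (h : ∀ᶠ n in atTop, c₁ * a ^ n ≤ u n ∧ u n ≤ c₂ * a ^ n) :
    Tendsto (fun n : ℕ => log (u n) / n) atTop (𝓝 (log a)) := by
  have hlim (c : ℝ) : Tendsto (fun n : ℕ => log c / n + log a) atTop (𝓝 (log a)) := by
    simpa using (tendsto_const_div_atTop_nhds_zero_nat (log c)).add_const (log a)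
  have hlog {c : ℝ} (hc : 0 < c) {n : ℕ} (hn : 0 < n) :
      log (c * a ^ n) / n = log c / n + log a := by
    rw [log_mul hc.ne' (pow_pos ha n).ne', log_pow]
    field_simp
  refine tendsto_of_tendsto_of_tendsto_of_le_of_le' (hlim c₁) (hlim c₂) ?_ ?_
  · filter_upwards [h, eventually_gt_atTop 0] with n hu hn
    rw [← hlog hc₁ hn]
    gcongr
    exact hu.1
  · filter_upwards [h, eventually_gt_atTop 0] with n hu hn
    have hu₀ : 0 < u n := (mul_pos hc₁ (pow_pos ha n)).trans_le hu.1
    have hc₂ : 0 < c₂ := pos_of_mul_pos_left (hu₀.trans_le hu.2) (pow_pos ha n).le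
    rw [← hlog hc₂ hn]
    gcongr
    exact hu.2

variable {R : Type*} [CommRing R]

def degreeRec : LinearRecurrence R where
  order := 4
  coeffs := ![1, -3, 0, 3]

theorem degreeRec_isSolution_iff {u : ℕ → R} :
    degreeRec.IsSolution u ↔ ∀ n, u (n + 4) = u n - 3 * u (n + 1) + 3 * u (n + 3) := by
  rw [degreeRec]
  simp [LinearRecurrence.IsSolution, Fin.sum_univ_four, sub_eq_add_neg]

theorem degreeRec_isSolution_geom {q : R} (hq : (q ^ 2 - 1) * (q ^ 2 - 3 * q + 1) = 0) :
    degreeRec.IsSolution (q ^ ·) :=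
  degreeRec_isSolution_iff.2 fun n => by linear_combination q ^ n * hq

theorem degree_add_four {d f b c : ℕ → R}
    (hd : ∀ n, d (n + 1) = 3 * d n - 4 * f n) (hf : ∀ n, f (n + 1) = c n)
    (hb : ∀ n, b (n + 1) = 2 * d n - 3 * f n) (hc : ∀ n, c (n + 1) = b n) (n : ℕ) :
    d (n + 4) = d n - 3 * d (n + 1) + 3 * d (n + 3) := by
  linear_combination hd (n + 3) - 4 * hf (n + 2) - 4 * hc (n + 1) - 4 * hb n + 3 * hd n

theorem degree_one_two_three {d f b c : ℕ → R} (hd0 : d 0 = 1) (hf0 : f 0 = 0) (hb0 : b 0 = 0)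
    (hc0 : c 0 = 0) (hd : ∀ n, d (n + 1) = 3 * d n - 4 * f n) (hf : ∀ n, f (n + 1) = c n)
    (hc : ∀ n, c (n + 1) = b n) :
    d 1 = 3 ∧ d 2 = 9 ∧ d 3 = 27 := by
  have h1 : d 1 = 3 := by rw [hd 0, hd0, hf0]; ring
  have h2 : d 2 = 9 := by rw [hd 1, h1, hf 0, hc0]; ring
  exact ⟨h1, h2, by rw [hd 2, h2, hf 1, hc 0, hb0]; ring⟩

theorem sq_sq_sub_three_mul_sq_add_one_eq_zero {x : R} (hx : x ^ 2 = x + 1) :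
    (x ^ 2) ^ 2 - 3 * x ^ 2 + 1 = 0 := by
  linear_combination (x ^ 2 + x - 1) * hx

def degreeClosedForm (n : ℕ) : ℝ := 8 / 5 * ((φ ^ 2) ^ n + (ψ ^ 2) ^ n) - 1 / 5 * (-1) ^ n - 2

theorem degreeRec_isSolution_closedForm : degreeRec.IsSolution degreeClosedForm := by
  have hgeom {q : ℝ} (hq : q ^ 2 = q + 1) : degreeRec.IsSolution ((q ^ 2) ^ ·) :=
    degreeRec_isSolution_geom (by rw [sq_sq_sub_three_mul_sq_add_one_eq_zero hq, mul_zero])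
  have hneg : degreeRec.IsSolution ((-1 : ℝ) ^ ·) := degreeRec_isSolution_geom (by norm_num)
  have hone : degreeRec.IsSolution ((1 : ℝ) ^ ·) := degreeRec_isSolution_geom (by norm_num)
  have hsplit : degreeClosedForm = (8 / 5 : ℝ) • ((φ ^ 2) ^ ·) + (8 / 5 : ℝ) • ((ψ ^ 2) ^ ·)
      - (1 / 5 : ℝ) • ((-1 : ℝ) ^ ·) - (2 : ℝ) • ((1 : ℝ) ^ ·) := by
    funext n
    simp only [degreeClosedForm, Pi.sub_apply, Pi.add_apply, Pi.smul_apply, smul_eq_mul, one_pow]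
    ring
  simp only [LinearRecurrence.is_sol_iff_mem_solSpace] at hgeom hneg hone ⊢
  rw [hsplit]
  exact sub_mem (sub_mem (add_mem (Submodule.smul_mem _ _ (hgeom goldenRatio_sq))
    (Submodule.smul_mem _ _ (hgeom goldenConj_sq))) (Submodule.smul_mem _ _ hneg))
    (Submodule.smul_mem _ _ hone)

theorem degreeClosedForm_zero_one_two_three :
    degreeClosedForm 0 = 1 ∧ degreeClosedForm 1 = 3 ∧ degreeClosedForm 2 = 9 ∧
      degreeClosedForm 3 = 27 := by
  have hsum : φ ^ 2 + ψ ^ 2 = 3 := by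
    rw [goldenRatio_sq, goldenConj_sq]; linear_combination goldenRatio_add_goldenConj
  have hprod : φ ^ 2 * ψ ^ 2 = 1 := by
    rw [← mul_pow, goldenRatio_mul_goldenConj]; norm_num
  simp only [degreeClosedForm]
  refine ⟨by norm_num, by linear_combination 8 / 5 * hsum, ?_, ?_⟩
  · linear_combination 8 / 5 * (φ ^ 2 + ψ ^ 2 + 3) * hsum - 16 / 5 * hprod
  · linear_combination 8 / 5 * ((φ ^ 2 + ψ ^ 2) ^ 2 + 3 * (φ ^ 2 + ψ ^ 2) + 6) * hsum
      - 24 / 5 * (φ ^ 2 + ψ ^ 2) * hprod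

theorem degreeClosedForm_bounds {n : ℕ} (hn : n ≠ 0) :
    1 / 2 * (φ ^ 2) ^ n ≤ degreeClosedForm n ∧ degreeClosedForm n ≤ 8 / 5 * (φ ^ 2) ^ n := by
  have hA : 2 ≤ φ ^ 2 := by rw [goldenRatio_sq]; linarith [one_lt_goldenRatio]
  have hAn : 2 ≤ (φ ^ 2) ^ n := hA.trans (le_self_pow₀ (by linarith) hn)
  have hB : ψ ^ 2 ≤ 1 := by rw [goldenConj_sq]; linarith [goldenConj_neg]
  have hBn : (ψ ^ 2) ^ n ≤ 1 := pow_le_one₀ (sq_nonneg ψ) hB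
  have hBn₀ : 0 ≤ (ψ ^ 2) ^ n := by positivity
  have hsign := abs_le.1 (abs_neg_one_pow (α := ℝ) n).le
  simp only [degreeClosedForm]
  constructor <;> linarith [hsign.1, hsign.2]

theorem goldenRatio_zpow_two_mul (n : ℕ) : φ ^ (2 * (n : ℤ)) = (φ ^ 2) ^ n := by
  rw [zpow_mul]; norm_cast

theorem goldenRatio_zpow_neg_two_mul (n : ℕ) : φ ^ (-(2 * (n : ℤ))) = (ψ ^ 2) ^ n := by
  rw [zpow_neg, goldenRatio_zpow_two_mul, ← inv_pow, ← inv_pow, inv_goldenRatio, neg_sq]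

theorem phi_eq_goldenRatio : phi = φ := rfl

end

/-- Closed form of the degree sequence of a map `Φ = g∘crem₃` with `g` of type (C):
`dₙ = (8/5)(φ^{2n} + φ^{−2n}) − (1/5)(−1)ⁿ − 2`; in particular `dₙ ∼ φ^{2n}` as
`n → ∞` and `Φ` has positive algebraic entropy `S = 2 log φ`, hence is non-integrable. -/
theorem typeC_degree_closed_form (d fs b c : ℕ → ℤ)
    (hd0 : d 0 = 1) (hf0 : fs 0 = 0) (hb0 : b 0 = 0) (hc0 : c 0 = 0)
    (hd : ∀ n : ℕ, d (n + 1) = 3 * d n - 4 * fs n)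
    (hf : ∀ n : ℕ, fs (n + 1) = c n)
    (hb : ∀ n : ℕ, b (n + 1) = 2 * d n - 3 * fs n)
    (hc : ∀ n : ℕ, c (n + 1) = b n) :
    (∀ n : ℕ, (d n : ℝ) =
      (8 / 5) * (phi ^ (2 * (n : ℤ)) + phi ^ (-(2 * (n : ℤ)))) - (1 / 5) * (-1) ^ n - 2) ∧
    Tendsto (fun n : ℕ => Real.log (d n) / n) atTop (nhds (2 * Real.log phi)) := by
  have hsol : degreeRec.IsSolution (fun n => (d n : ℝ)) :=
    degreeRec_isSolution_iff.2 fun n => by exact_mod_cast degree_add_four hd hf hb hc n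
  have hclosed : ∀ n, (d n : ℝ) = degreeClosedForm n := by
    refine congrFun ((degreeRec.eq_iff_eqOn_range_order _ _ hsol
      degreeRec_isSolution_closedForm).2 fun i hi => ?_)
    obtain ⟨h1, h2, h3⟩ := degree_one_two_three hd0 hf0 hb0 hc0 hd hf hc
    obtain ⟨e0, e1, e2, e3⟩ := degreeClosedForm_zero_one_two_three
    replace hi : i < 4 := by simpa [degreeRec] using hi
    interval_cases i <;> simp [hd0, h1, h2, h3, e0, e1, e2, e3]
  refine ⟨fun n => ?_, ?_⟩
  · rw [hclosed, phi_eq_goldenRatio, goldenRatio_zpow_two_mul, goldenRatio_zpow_neg_two_mul,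
      degreeClosedForm]
  · simp_rw [hclosed]
    convert tendsto_log_div_of_le_of_le (by positivity) (by norm_num)
      ((eventually_ne_atTop 0).mono fun n hn => degreeClosedForm_bounds hn) using 2
    rw [Real.log_pow, phi_eq_goldenRatio]
    norm_num
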